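/- Let k ≥ 2, σ_i = i(k−i)/2, and let f : ℝ^k → ℝ^k be the right-hand side of system (P), i.e. f_1(ξ) = −σ₁(e^{−(ξ₂−ξ₁)} − 1), f_i(ξ) = σ_{i−1}(e^{−(ξ_i−ξ_{i−1})} − 1) − σ_i(e^{−(ξ_{i+1}−ξ_i)} − 1) for 2 ≤ i ≤ k−1, and f_k(ξ) = σ_{k−1}(e^{−(ξ_k−ξ_{k−1})} − 1). Let η ∈ (0,1), C₀ > 0, τ₀ ≥ 0, and let ξ : [τ₀, ∞) → ℝ^k be a C¹ function such that for all τ ≥ τ₀: ∑_{i=1}^k ξ_i(τ) = 0, ‖ξ(τ)‖ ≤ C₀, and ‖ξ'(τ) − f(ξ(τ))‖ ≤ C₀·e^{−ητ}, where ‖·‖ is the Euclidean norm on ℝ^k. Then there exists a constant C > 0 (depending on k, η, C₀, τ₀) such that ‖ξ(τ)‖ ≤ C·e^{−ητ} for all τ ≥ τ₀. -/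

import Mathlib

/-- `σᵢ = i(k-i)/2` (so that `σ₀ = σ_k = 0`). -/
noncomputable def sig (k i : ℕ) : ℝ := (i : ℝ) * ((k : ℝ) - (i : ℝ)) / 2

/-- The right-hand side of system (P): for `i = 1,…,k`,
`fᵢ(ξ) = σᵢ₋₁(e^{-(ξᵢ-ξᵢ₋₁)} - 1) - σᵢ(e^{-(ξᵢ₊₁-ξᵢ)} - 1)`
(the conventions for `i = 1` and `i = k` are automatic since `σ₀ = σ_k = 0`). -/
noncomputable def fP (k : ℕ) (ξ : ℕ → ℝ) (i : ℕ) : ℝ :=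
  sig k (i - 1) * (Real.exp (-(ξ i - ξ (i - 1))) - 1)
    - sig k i * (Real.exp (-(ξ (i + 1) - ξ i)) - 1)

/-
For `V = ‖ξ‖²`, summation by parts turns `⟨ξ, f(ξ)⟩` into `∑ σ_l d_l (e^{-d_l} - 1)` over the
gaps `d_l = ξ_{l+1} - ξ_l`. Since `d (e^{-d} - 1) ≤ -d² / (1 + M)` for `|d| ≤ M`, and since
`‖ξ‖² ≤ ∑ σ_l d_l²` for mean-zero `ξ` (write `k ‖ξ‖² = ∑_{i<j} (ξ_j - ξ_i)²` and apply
Cauchy–Schwarz to each `ξ_j - ξ_i = ∑_{i ≤ l < j} d_l`), we get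
`V' ≤ -2V / (1 + 2M) + 2 C₀ e^{-ητ} √V` as long as `‖ξ‖ ≤ M`.
A barrier argument with `M = C₀` gives exponential decay at some rate below `1 / (1 + 2C₀)`, so
after a time depending only on the constants `‖ξ‖ ≤ δ` with `1 / (1 + 2δ) > η`; from then on the
same barrier argument applies at rate `η`.
-/

open Finset Real

lemma sum_Icc_sum_Ico_sub_sq (x : ℕ → ℝ) (k : ℕ) :
    ∑ j ∈ Icc 1 k, ∑ i ∈ Ico 1 j, (x j - x i) ^ 2
      = k * ∑ i ∈ Icc 1 k, x i ^ 2 - (∑ i ∈ Icc 1 k, x i) ^ 2 := by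
  induction k with
  | zero => simp
  | succ k ih =>
    have hexp : ∑ i ∈ Icc 1 k, (x (k + 1) - x i) ^ 2
        = k * x (k + 1) ^ 2 - 2 * x (k + 1) * ∑ i ∈ Icc 1 k, x i + ∑ i ∈ Icc 1 k, x i ^ 2 := by
      simp only [sub_sq, sum_add_distrib, sum_sub_distrib, sum_const, Nat.card_Icc, mul_sum]
      simp
    rw [sum_Icc_succ_top (by omega), ih, Ico_add_one_right_eq_Icc, hexp,
      sum_Icc_succ_top (by omega), sum_Icc_succ_top (by omega)]
    push_cast
    ring

lemma sum_Icc_natCast (n : ℕ) : ∑ i ∈ Icc 1 n, (i : ℝ) = n * (n + 1) / 2 := by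
  induction n with
  | zero => simp
  | succ n ih =>
    rw [sum_Icc_succ_top (by omega), ih]
    push_cast
    ring

lemma sum_Icc_sum_Ioc_sub (k l : ℕ) (hl : l ≤ k) :
    ∑ i ∈ Icc 1 l, ∑ j ∈ Ioc l k, ((j : ℝ) - i) = k * sig k l := by
  induction k, hl using Nat.le_induction with
  | base => simp [sig]
  | succ k hlk ih =>
    have hstep : ∑ i ∈ Icc 1 l, ((k + 1 : ℕ) - (i : ℝ)) = l * (k + 1) - l * (l + 1) / 2 := by
      rw [sum_sub_distrib, sum_const, Nat.card_Icc, sum_Icc_natCast]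
      simp only [add_tsub_cancel_right, nsmul_eq_mul]
      push_cast
      ring
    simp only [sum_Ioc_succ_top (by omega : l ≤ k), sum_add_distrib, ih, hstep, sig]
    push_cast
    ring

lemma sum_Icc_sum_Ico_mul_sum_Ico (D : ℕ → ℝ) (k : ℕ) :
    ∑ j ∈ Icc 1 k, ∑ i ∈ Ico 1 j, ((j : ℝ) - i) * ∑ l ∈ Ico i j, D l
      = k * ∑ l ∈ Ico 1 k, sig k l * D l := by
  calc ∑ j ∈ Icc 1 k, ∑ i ∈ Ico 1 j, ((j : ℝ) - i) * ∑ l ∈ Ico i j, D l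
      = ∑ j ∈ Icc 1 k, ∑ l ∈ Ico 1 j, ∑ i ∈ Icc 1 l, ((j : ℝ) - i) * D l := by
        refine sum_congr rfl fun j _ => ?_
        simp_rw [mul_sum]
        exact sum_comm' fun i l => by simp only [mem_Ico, mem_Icc]; omega
    _ = ∑ l ∈ Ico 1 k, ∑ j ∈ Ioc l k, ∑ i ∈ Icc 1 l, ((j : ℝ) - i) * D l :=
        sum_comm' fun j l => by simp only [mem_Ico, mem_Icc, mem_Ioc]; omega
    _ = k * ∑ l ∈ Ico 1 k, sig k l * D l := by
        rw [mul_sum]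
        refine sum_congr rfl fun l hl => ?_
        simp_rw [sum_comm (s := Ioc l k), ← sum_mul]
        rw [sum_Icc_sum_Ioc_sub k l (mem_Ico.1 hl).2.le]
        ring

lemma sub_sq_le_mul_sum_Ico_sq (x : ℕ → ℝ) {i j : ℕ} (hij : i ≤ j) :
    (x j - x i) ^ 2 ≤ ((j : ℝ) - i) * ∑ l ∈ Ico i j, (x (l + 1) - x l) ^ 2 := by
  have h := sq_sum_le_card_mul_sum_sq (s := Ico i j) (f := fun l => x (l + 1) - x l)
  rwa [sum_Ico_sub x hij, Nat.card_Ico, Nat.cast_sub hij] at h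

lemma sum_sq_le_sum_sig_mul_sq (x : ℕ → ℝ) (k : ℕ) (hx : ∑ i ∈ Icc 1 k, x i = 0) :
    ∑ i ∈ Icc 1 k, x i ^ 2 ≤ ∑ l ∈ Ico 1 k, sig k l * (x (l + 1) - x l) ^ 2 := by
  rcases k.eq_zero_or_pos with rfl | hk
  · simp
  have key : (k : ℝ) * ∑ i ∈ Icc 1 k, x i ^ 2
      ≤ k * ∑ l ∈ Ico 1 k, sig k l * (x (l + 1) - x l) ^ 2 := by
    calc (k : ℝ) * ∑ i ∈ Icc 1 k, x i ^ 2
        = ∑ j ∈ Icc 1 k, ∑ i ∈ Ico 1 j, (x j - x i) ^ 2 := by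
          rw [sum_Icc_sum_Ico_sub_sq, hx]; ring
      _ ≤ ∑ j ∈ Icc 1 k, ∑ i ∈ Ico 1 j,
            ((j : ℝ) - i) * ∑ l ∈ Ico i j, (x (l + 1) - x l) ^ 2 :=
          sum_le_sum fun j _ => sum_le_sum fun i hi =>
            sub_sq_le_mul_sum_Ico_sq x (mem_Ico.1 hi).2.le
      _ = _ := sum_Icc_sum_Ico_mul_sum_Ico _ k
  exact le_of_mul_le_mul_left key (by exact_mod_cast hk)

lemma mul_exp_neg_sub_one_le {d M : ℝ} (hd : |d| ≤ M) :
    d * (exp (-d) - 1) ≤ -(d ^ 2 / (1 + M)) := by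
  have hM : 0 < 1 + M := by linarith [abs_nonneg d]
  suffices key : d ^ 2 ≤ d * (1 - exp (-d)) * (1 + M) by
    linarith [(div_le_iff₀ hM).2 key]
  rcases le_or_gt d 0 with hd0 | hd0
  · have h : d ^ 2 ≤ d * (1 - exp (-d)) := by
      nlinarith [mul_nonneg (neg_nonneg.2 hd0) (by linarith [add_one_le_exp (-d)] :
        0 ≤ exp (-d) - 1 + d)]
    nlinarith [mul_nonneg (le_trans (abs_nonneg d) hd) (le_trans (sq_nonneg d) h)]
  · have h : (1 + d) * exp (-d) ≤ 1 := by
      calc (1 + d) * exp (-d) ≤ exp d * exp (-d) := by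
            gcongr; linarith [add_one_le_exp d]
        _ = 1 := by rw [← exp_add, add_neg_cancel, exp_zero]
    have h' : d ≤ (1 - exp (-d)) * (1 + M) := by
      nlinarith [mul_nonneg (sub_nonneg.2 (exp_le_one_iff.2 (neg_nonpos.2 hd0.le)))
        (sub_nonneg.2 (abs_le.1 hd).2)]
    nlinarith [mul_le_mul_of_nonneg_left h' hd0.le]

lemma sum_Icc_mul_sub_eq (x h : ℕ → ℝ) (h₀ : h 0 = 0) (k : ℕ) :
    ∑ i ∈ Icc 1 k, x i * (h (i - 1) - h i)
      = ∑ l ∈ Ico 1 k, (x (l + 1) - x l) * h l - x k * h k := by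
  induction k with
  | zero => simp [h₀]
  | succ k ih =>
    rw [sum_Icc_succ_top (by omega), ih, Nat.add_sub_cancel]
    rcases k.eq_zero_or_pos with rfl | hk
    · simp [h₀]
    · rw [sum_Ico_succ_top hk]
      ring

lemma sig_nonneg {k l : ℕ} (hl : l ≤ k) : 0 ≤ sig k l :=
  div_nonneg (mul_nonneg (Nat.cast_nonneg l) (sub_nonneg.2 (by exact_mod_cast hl))) zero_le_two

lemma sum_mul_fP (k : ℕ) (x : ℕ → ℝ) :
    ∑ i ∈ Icc 1 k, x i * fP k x i
      = ∑ l ∈ Ico 1 k, sig k l * ((x (l + 1) - x l) * (exp (-(x (l + 1) - x l)) - 1)) := by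
  set h : ℕ → ℝ := fun l => sig k l * (exp (-(x (l + 1) - x l)) - 1)
  have hfP : ∀ i ∈ Icc 1 k, x i * fP k x i = x i * (h (i - 1) - h i) := fun i hi => by
    simp only [fP, h, Nat.sub_add_cancel (mem_Icc.1 hi).1]
  have hk : h k = 0 := by simp [h, sig]
  rw [sum_congr rfl hfP, sum_Icc_mul_sub_eq x h (by simp [h, sig]), hk, mul_zero, sub_zero]
  exact sum_congr rfl fun l _ => by simp only [h]; ring

lemma sum_mul_fP_le (k : ℕ) (x : ℕ → ℝ) {M : ℝ} (hM₀ : 0 ≤ M)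
    (hx : ∑ i ∈ Icc 1 k, x i = 0) (hM : ∑ i ∈ Icc 1 k, x i ^ 2 ≤ M ^ 2) :
    ∑ i ∈ Icc 1 k, x i * fP k x i ≤ -(1 / (1 + 2 * M)) * ∑ i ∈ Icc 1 k, x i ^ 2 := by
  have hxM : ∀ i ∈ Icc 1 k, |x i| ≤ M := fun i hi =>
    abs_le_of_sq_le_sq ((single_le_sum (fun j _ => sq_nonneg (x j)) hi).trans hM) hM₀
  have hd : ∀ l ∈ Ico 1 k, |x (l + 1) - x l| ≤ 2 * M := fun l hl => by
    have hl' := mem_Ico.1 hl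
    have h₁ := hxM (l + 1) (mem_Icc.2 ⟨by omega, by omega⟩)
    have h₂ := hxM l (mem_Icc.2 ⟨hl'.1, hl'.2.le⟩)
    linarith [abs_sub (x (l + 1)) (x l)]
  calc ∑ i ∈ Icc 1 k, x i * fP k x i
      = ∑ l ∈ Ico 1 k, sig k l * ((x (l + 1) - x l) * (exp (-(x (l + 1) - x l)) - 1)) :=
        sum_mul_fP k x
    _ ≤ ∑ l ∈ Ico 1 k, sig k l * -((x (l + 1) - x l) ^ 2 / (1 + 2 * M)) :=
        sum_le_sum fun l hl => mul_le_mul_of_nonneg_left (mul_exp_neg_sub_one_le (hd l hl))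
          (sig_nonneg (mem_Ico.1 hl).2.le)
    _ = -(1 / (1 + 2 * M)) * ∑ l ∈ Ico 1 k, sig k l * (x (l + 1) - x l) ^ 2 := by
        rw [mul_sum]
        exact sum_congr rfl fun l _ => by ring
    _ ≤ -(1 / (1 + 2 * M)) * ∑ i ∈ Icc 1 k, x i ^ 2 :=
        mul_le_mul_of_nonpos_left (sum_sq_le_sum_sig_mul_sq x k hx)
          (by rw [neg_nonpos]; positivity)

lemma two_mul_sum_mul_le (k : ℕ) (x y : ℕ → ℝ) {M E : ℝ} (hM₀ : 0 ≤ M)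
    (hx : ∑ i ∈ Icc 1 k, x i = 0) (hM : ∑ i ∈ Icc 1 k, x i ^ 2 ≤ M ^ 2)
    (hy : √(∑ i ∈ Icc 1 k, (y i - fP k x i) ^ 2) ≤ E) :
    2 * ∑ i ∈ Icc 1 k, x i * y i
      ≤ -(2 / (1 + 2 * M)) * ∑ i ∈ Icc 1 k, x i ^ 2 + 2 * E * √(∑ i ∈ Icc 1 k, x i ^ 2) := by
  have hdrift := sum_mul_fP_le k x hM₀ hx hM
  have herr : ∑ i ∈ Icc 1 k, x i * (y i - fP k x i) ≤ √(∑ i ∈ Icc 1 k, x i ^ 2) * E :=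
    (sum_mul_le_sqrt_mul_sqrt _ _ _).trans (mul_le_mul_of_nonneg_left hy (sqrt_nonneg _))
  have hsplit : ∑ i ∈ Icc 1 k, x i * y i
      = ∑ i ∈ Icc 1 k, x i * fP k x i + ∑ i ∈ Icc 1 k, x i * (y i - fP k x i) := by
    rw [← sum_add_distrib]
    exact sum_congr rfl fun i _ => by ring
  have hc : -(2 / (1 + 2 * M)) = 2 * -(1 / (1 + 2 * M)) := by ring
  rw [hsplit, hc]
  linarith

lemma hasDerivAt_sum_sq {ι : Type*} {s : Finset ι} {x x' : ι → ℝ → ℝ} {t : ℝ}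
    (h : ∀ i ∈ s, HasDerivAt (x i) (x' i t) t) :
    HasDerivAt (fun t => ∑ i ∈ s, x i t ^ 2) (2 * ∑ i ∈ s, x i t * x' i t) t := by
  rw [mul_sum]
  exact HasDerivAt.fun_sum fun i hi => ((h i hi).fun_pow 2).congr_deriv (by simp; ring)

lemma sq_le_of_hasDerivAt_le {V V' : ℝ → ℝ} {a c K r A : ℝ}
    (hV : ∀ τ ≥ a, HasDerivAt V (V' τ) τ)
    (hdiss : ∀ τ ≥ a, V' τ ≤ -2 * c * V τ + 2 * K * exp (-r * τ) * √(V τ))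
    (hA : 0 < A) (hKA : K < (c - r) * A) (ha : V a ≤ (A * exp (-r * a)) ^ 2) :
    ∀ τ ≥ a, V τ ≤ (A * exp (-r * τ)) ^ 2 := by
  have hB : ∀ τ, HasDerivAt (fun t => (A * exp (-r * t)) ^ 2)
      (-2 * r * (A * exp (-r * τ)) ^ 2) τ := fun τ => by
    refine ((((hasDerivAt_id τ).const_mul (-r)).exp.const_mul A).fun_pow 2).congr_deriv ?_
    simp only [id, Nat.cast_ofNat]
    ring
  intro τ hτ
  refine image_le_of_deriv_right_lt_deriv_boundary
    (fun t ht => (hV t ht.1).continuousAt.continuousWithinAt)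
    (fun t ht => (hV t ht.1).hasDerivWithinAt) ha hB (fun t ht hVt => ?_) ⟨hτ, le_rfl⟩
  -- at a contact point `√V = A e^{-rt}`, so `V' ≤ 2A e^{-2rt} (K - cA) < -2r A² e^{-2rt}`
  have he := exp_pos (-r * t)
  have hsqrt : √(V t) = A * exp (-r * t) := by rw [hVt, sqrt_sq (by positivity)]
  have := hdiss t ht.1
  rw [hsqrt, hVt] at this
  nlinarith [mul_pos (mul_pos hA he) he]

def IsApproxDissipative (C₀ η τ₀ : ℝ) (V V' : ℝ → ℝ) : Prop :=
  ∀ τ ≥ τ₀, HasDerivAt V (V' τ) τ ∧ V τ ≤ C₀ ^ 2 ∧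
    ∀ M ≥ 0, V τ ≤ M ^ 2 →
      V' τ ≤ -(2 / (1 + 2 * M)) * V τ + 2 * (C₀ * exp (-η * τ)) * √(V τ)

lemma mul_exp_mul_exp_neg (a b : ℝ) : a * exp b * exp (-b) = a := by
  rw [mul_assoc, ← exp_add, add_neg_cancel, exp_zero, mul_one]

lemma exists_time_forall_sq_le {C₀ η τ₀ δ : ℝ} (hη : 0 < η) (hC₀ : 0 < C₀) (hτ₀ : 0 ≤ τ₀)
    (hδ : 0 < δ) :
    ∃ T ≥ τ₀, ∀ V V' : ℝ → ℝ, IsApproxDissipative C₀ η τ₀ V V' → ∀ τ ≥ T, V τ ≤ δ ^ 2 := by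
  set c := 1 / (1 + 2 * C₀)
  have hc : 0 < c := by positivity
  obtain ⟨r, hr, hrc, hrη⟩ : ∃ r, 0 < r ∧ r < c ∧ r ≤ η :=
    ⟨min c η / 2, by positivity, by linarith [min_le_left c η], by linarith [min_le_right c η]⟩
  set A := max (C₀ * exp (r * τ₀)) (2 * C₀ / (c - r))
  have hA : 0 < A := lt_max_of_lt_left (by positivity)
  refine ⟨max τ₀ (log (A / δ) / r), le_max_left _ _, fun V V' hV τ hτ => ?_⟩
  have hdecay : V τ ≤ (A * exp (-r * τ)) ^ 2 := by
    refine sq_le_of_hasDerivAt_le (c := c) (K := C₀) (fun t ht => (hV t ht).1) (fun t ht => ?_)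
      hA ?_ ?_ τ (le_of_max_le_left hτ)
    · obtain ⟨-, hVC, hdiss⟩ := hV t ht
      have hexp : exp (-η * t) ≤ exp (-r * t) := exp_le_exp.2 (by nlinarith)
      have hc2 : -(2 / (1 + 2 * C₀)) = -2 * c := by ring
      calc V' t ≤ -2 * c * V t + 2 * C₀ * exp (-η * t) * √(V t) := by
            rw [← hc2, mul_assoc 2 C₀]; exact hdiss C₀ hC₀.le hVC
        _ ≤ -2 * c * V t + 2 * C₀ * exp (-r * t) * √(V t) := by gcongr
    · have : 2 * C₀ ≤ (c - r) * A := by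
        rw [← div_le_iff₀' (by linarith)]
        exact le_max_right _ _
      linarith
    · calc V τ₀ ≤ C₀ ^ 2 := (hV τ₀ le_rfl).2.1
        _ = (C₀ * exp (r * τ₀) * exp (-r * τ₀)) ^ 2 := by rw [neg_mul, mul_exp_mul_exp_neg]
        _ ≤ (A * exp (-r * τ₀)) ^ 2 := by gcongr; exact le_max_left _ _
  have hsmall : A * exp (-r * τ) ≤ δ := by
    have hτ' : log (A / δ) ≤ r * τ := (div_le_iff₀' hr).1 (le_of_max_le_right hτ)
    calc A * exp (-r * τ) ≤ A * exp (-log (A / δ)) := by gcongr; linarith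
      _ = δ := by rw [exp_neg, exp_log (by positivity)]; field_simp
  exact hdecay.trans (pow_le_pow_left₀ (by positivity) hsmall 2)

lemma exists_sq_le_exp_of_forall_ge_sq_le {C₀ η τ₀ δ T : ℝ} (hη : 0 < η) (hC₀ : 0 < C₀)
    (hδ : 0 < δ) (hδη : η < 1 / (1 + 2 * δ)) (hT : τ₀ ≤ T) :
    ∃ C > 0, ∀ V V' : ℝ → ℝ, IsApproxDissipative C₀ η τ₀ V V' → (∀ τ ≥ T, V τ ≤ δ ^ 2) →
      ∀ τ ≥ τ₀, V τ ≤ (C * exp (-η * τ)) ^ 2 := by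
  set c := 1 / (1 + 2 * δ)
  set A := max (δ * exp (η * T)) (2 * C₀ / (c - η))
  have hA : 0 < A := lt_max_of_lt_left (by positivity)
  refine ⟨max A (C₀ * exp (η * T)), lt_max_of_lt_left hA, fun V V' hV hsmall τ hτ => ?_⟩
  rcases le_total T τ with hTτ | hτT
  · have hdecay : V τ ≤ (A * exp (-η * τ)) ^ 2 := by
      refine sq_le_of_hasDerivAt_le (c := c) (K := C₀) (fun t ht => (hV t (hT.trans ht)).1)
        (fun t ht => ?_) hA ?_ ?_ τ hTτ
      · have := (hV t (hT.trans ht)).2.2 δ hδ.le (hsmall t ht)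
        have hc2 : -(2 / (1 + 2 * δ)) = -2 * c := by ring
        rwa [hc2, ← mul_assoc 2 C₀] at this
      · have : 2 * C₀ ≤ (c - η) * A := by
          rw [← div_le_iff₀' (by linarith)]
          exact le_max_right _ _
        linarith
      · calc V T ≤ δ ^ 2 := hsmall T le_rfl
          _ = (δ * exp (η * T) * exp (-η * T)) ^ 2 := by rw [neg_mul, mul_exp_mul_exp_neg]
          _ ≤ (A * exp (-η * T)) ^ 2 := by gcongr; exact le_max_left _ _
    exact hdecay.trans (by gcongr; exact le_max_left _ _)
  · calc V τ ≤ C₀ ^ 2 := (hV τ hτ).2.1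
      _ = (C₀ * exp (η * T) * exp (-η * T)) ^ 2 := by rw [neg_mul, mul_exp_mul_exp_neg]
      _ ≤ (max A (C₀ * exp (η * T)) * exp (-η * τ)) ^ 2 := by
          have hexp : exp (-η * T) ≤ exp (-η * τ) := exp_le_exp.2 (by nlinarith)
          gcongr
          exact le_max_right _ _

lemma exists_sq_le_exp_of_isApproxDissipative {C₀ η τ₀ : ℝ} (hη₀ : 0 < η) (hη₁ : η < 1)
    (hC₀ : 0 < C₀) (hτ₀ : 0 ≤ τ₀) :
    ∃ C > 0, ∀ V V' : ℝ → ℝ, IsApproxDissipative C₀ η τ₀ V V' →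
      ∀ τ ≥ τ₀, V τ ≤ (C * exp (-η * τ)) ^ 2 := by
  have hδ : 0 < (1 - η) / 2 := by linarith
  have hδη : η < 1 / (1 + 2 * ((1 - η) / 2)) := by
    rw [lt_div_iff₀ (by linarith)]
    nlinarith
  obtain ⟨T, hT, hsmall⟩ := exists_time_forall_sq_le hη₀ hC₀ hτ₀ hδ
  obtain ⟨C, hC, hdecay⟩ := exists_sq_le_exp_of_forall_ge_sq_le hη₀ hC₀ hδ hδη hT
  exact ⟨C, hC, fun V V' hV => hdecay V V' hV (hsmall V V' hV)⟩

theorem stmt16_general (k : ℕ) (η C₀ τ₀ : ℝ)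
    (hη₀ : 0 < η) (hη₁ : η < 1) (hC₀ : 0 < C₀) (hτ₀ : 0 ≤ τ₀) :
    ∃ C > 0, ∀ ξ ξ' : ℕ → ℝ → ℝ,
      (∀ i, 1 ≤ i → i ≤ k → ∀ τ : ℝ, τ₀ ≤ τ → HasDerivAt (ξ i) (ξ' i τ) τ) →
      (∀ τ : ℝ, τ₀ ≤ τ → ∑ i ∈ Finset.Icc 1 k, ξ i τ = 0) →
      (∀ τ : ℝ, τ₀ ≤ τ →
        Real.sqrt (∑ i ∈ Finset.Icc 1 k, (ξ i τ) ^ 2) ≤ C₀) →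
      (∀ τ : ℝ, τ₀ ≤ τ →
        Real.sqrt (∑ i ∈ Finset.Icc 1 k, (ξ' i τ - fP k (fun j => ξ j τ) i) ^ 2)
          ≤ C₀ * Real.exp (-η * τ)) →
      ∀ τ : ℝ, τ₀ ≤ τ →
        Real.sqrt (∑ i ∈ Finset.Icc 1 k, (ξ i τ) ^ 2) ≤ C * Real.exp (-η * τ) := by
  obtain ⟨C, hC, hdecay⟩ := exists_sq_le_exp_of_isApproxDissipative hη₀ hη₁ hC₀ hτ₀
  refine ⟨C, hC, fun ξ ξ' hderiv hsum hnorm herr τ hτ => ?_⟩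
  have hV : IsApproxDissipative C₀ η τ₀ (fun t => ∑ i ∈ Icc 1 k, ξ i t ^ 2)
      (fun t => 2 * ∑ i ∈ Icc 1 k, ξ i t * ξ' i t) := fun t ht =>
    ⟨hasDerivAt_sum_sq fun i hi => hderiv i (mem_Icc.1 hi).1 (mem_Icc.1 hi).2 t ht,
      (sqrt_le_left hC₀.le).1 (hnorm t ht),
      fun M hM hVM => two_mul_sum_mul_le k _ _ hM (hsum t ht) hVM (herr t ht)⟩
  exact (sqrt_le_left (by positivity)).2 (hdecay _ _ hV τ hτ)

/-- if `ξ` is a C¹ function on `[τ₀,∞)` with zero sum, Euclidean norm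
bounded by `C₀`, and `‖ξ'(τ) - f(ξ(τ))‖ ≤ C₀ e^{-ητ}` for some `η ∈ (0,1)`, then
`‖ξ(τ)‖ ≤ C e^{-ητ}` for a constant `C` depending only on `k, η, C₀, τ₀`. -/
theorem stmt16 (k : ℕ) (hk : 2 ≤ k) (η C₀ τ₀ : ℝ)
    (hη₀ : 0 < η) (hη₁ : η < 1) (hC₀ : 0 < C₀) (hτ₀ : 0 ≤ τ₀) :
    ∃ C > 0, ∀ ξ ξ' : ℕ → ℝ → ℝ,
      (∀ i, 1 ≤ i → i ≤ k → ∀ τ : ℝ, τ₀ ≤ τ → HasDerivAt (ξ i) (ξ' i τ) τ) →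
      (∀ τ : ℝ, τ₀ ≤ τ → ∑ i ∈ Finset.Icc 1 k, ξ i τ = 0) →
      (∀ τ : ℝ, τ₀ ≤ τ →
        Real.sqrt (∑ i ∈ Finset.Icc 1 k, (ξ i τ) ^ 2) ≤ C₀) →
      (∀ τ : ℝ, τ₀ ≤ τ →
        Real.sqrt (∑ i ∈ Finset.Icc 1 k, (ξ' i τ - fP k (fun j => ξ j τ) i) ^ 2)
          ≤ C₀ * Real.exp (-η * τ)) →
      ∀ τ : ℝ, τ₀ ≤ τ →
        Real.sqrt (∑ i ∈ Finset.Icc 1 k, (ξ i τ) ^ 2) ≤ C * Real.exp (-η * τ) :=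
  stmt16_general k η C₀ τ₀ hη₀ hη₁ hC₀ hτ₀
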